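/- Let η : ℝ → ℝ be a positive function, b ∈ ℝ³ fixed, α > 0, and let μ : ℝ → ℝ³ solve dμ/dt = −μ × (b η(t)) − α μ × (μ × (b η(t))). Then d/dt[−μ(t)·b] = −α η(t) ‖μ(t) × b‖² ≤ 0. -/

import Mathlib

open RealInnerProductSpace

noncomputable def cross3 (u v : EuclideanSpace ℝ (Fin 3)) : EuclideanSpace ℝ (Fin 3) :=
  WithLp.toLp 2 ![u 1 * v 2 - u 2 * v 1, u 2 * v 0 - u 0 * v 2, u 0 * v 1 - u 1 * v 0]

/-!
Along the flow, `d/dt ⟪μ, b⟫ = η ⟪-(μ × b) - α η μ × (μ × b), b⟫`. The precession term is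
orthogonal to `b`, and by cyclicity of the triple product the damping term contributes
`-α η ⟪μ × (μ × b), b⟫ = -α η ⟪μ × b, b × μ⟫ = α η ‖μ × b‖²`.
-/

open WithLp Matrix

theorem cross3_eq_crossProduct (u v : EuclideanSpace ℝ (Fin 3)) :
    cross3 u v = toLp 2 (ofLp u ⨯₃ ofLp v) := by
  rw [cross_apply]
  rfl

theorem inner_cross3_left_right (u v : EuclideanSpace ℝ (Fin 3)) : ⟪cross3 u v, v⟫ = 0 := by
  rw [cross3_eq_crossProduct, EuclideanSpace.inner_eq_star_dotProduct]
  exact dot_cross_self _ _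

theorem inner_cross3_cross3_right (u v : EuclideanSpace ℝ (Fin 3)) :
    ⟪cross3 u (cross3 u v), v⟫ = -‖cross3 u v‖ ^ 2 := by
  rw [← real_inner_self_eq_norm_sq, cross3_eq_crossProduct u v, cross3_eq_crossProduct]
  simp only [EuclideanSpace.inner_eq_star_dotProduct, star_trivial]
  rw [triple_product_permutation, triple_product_permutation, ← cross_anticomm u v,
    dotProduct_neg]

theorem cross3_smul_right (u v : EuclideanSpace ℝ (Fin 3)) (c : ℝ) :
    cross3 u (c • v) = c • cross3 u v := by
  simp only [cross3_eq_crossProduct, ofLp_smul, map_smul, toLp_smul]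

theorem inner_landauLifshitz_field (α c : ℝ) (m b : EuclideanSpace ℝ (Fin 3)) :
    ⟪-(cross3 m (c • b)) - α • cross3 m (cross3 m (c • b)), b⟫
      = α * c * ‖cross3 m b‖ ^ 2 := by
  simp only [cross3_smul_right, inner_sub_left, inner_neg_left, inner_smul_left,
    inner_cross3_left_right, inner_cross3_cross3_right, RCLike.conj_to_real]
  ring

theorem rode_landau_lifshitz_lyapunov (α : ℝ) (hα : 0 < α)
    (b : EuclideanSpace ℝ (Fin 3)) (η : ℝ → ℝ) (hη : ∀ t, 0 < η t)
    (μ : ℝ → EuclideanSpace ℝ (Fin 3))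
    (hμ : ∀ t, HasDerivAt μ
      (-(cross3 (μ t) (η t • b)) - α • cross3 (μ t) (cross3 (μ t) (η t • b))) t) :
    ∀ t : ℝ,
      HasDerivAt (fun s => -⟪μ s, b⟫) (-(α * η t * ‖cross3 (μ t) b‖ ^ 2)) t ∧
      -(α * η t * ‖cross3 (μ t) b‖ ^ 2) ≤ 0 := by
  intro t
  refine ⟨?_, neg_nonpos.mpr (by have := hη t; positivity)⟩
  have hV := ((hμ t).inner ℝ (hasDerivAt_const t b)).neg
  rwa [inner_zero_right, zero_add, inner_landauLifshitz_field] at hV
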